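/- arXiv:1605.04004 — 3 statements merged into one kernel-verified Lean document; each statement's English description precedes it below -/
import Mathlib

section
/- Let p_a ≥ p_b > 0 be reals and let t ∈ [0,1] satisfy t ≥ (p_a/(2p_b) − 1)·(1−t). Then p_a·t + p_b·(1−t) ≥ p_a − 2p_b + 2p_b²/p_a. -/
theorem pair_contribution_lower (p_a p_b t : ℝ)
    (hab : p_a ≥ p_b) (hb : p_b > 0) (ht0 : 0 ≤ t) (ht1 : t ≤ 1)
    (hmin : t ≥ (p_a / (2 * p_b) - 1) * (1 - t)) :
    p_a * t + p_b * (1 - t) ≥ p_a - 2 * p_b + 2 * p_b ^ 2 / p_a := by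
  have ha : p_a > 0 := lt_of_lt_of_le hb hab
  have h1 : 2 * p_b * t ≥ (p_a - 2 * p_b) * (1 - t) := by
    have := mul_le_mul_of_nonneg_left hmin (le_of_lt (by linarith : (0:ℝ) < 2 * p_b))
    field_simp at this
    nlinarith [this]
  have h2 : 2 * p_b ^ 2 / p_a * p_a = 2 * p_b ^ 2 := div_mul_cancel₀ _ ha.ne'
  nlinarith [mul_nonneg (sub_nonneg.2 hab) ht0, mul_nonneg ht0 (sub_nonneg.2 ht1),
    mul_pos hb ha, sq_nonneg (p_a - 2*p_b), mul_nonneg (mul_nonneg ht0 hb.le) ha.le,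
    mul_le_mul_of_nonneg_left h1 ha.le]
end

section
/- For all reals p_a, p_b with 0 < p_b ≤ p_a ≤ 1, max{p_b, p_a − 2p_b + 2p_b²/p_a} ≥ max{p_b, p_a − 2p_b, (p_a − p_b)/1.208, (2p_a − p_b)/3.2}. -/
theorem linearization (p_a p_b : ℝ) (hb : 0 < p_b) (hab : p_b ≤ p_a) (ha : p_a ≤ 1) :
    max p_b (p_a - 2 * p_b + 2 * p_b ^ 2 / p_a)
      ≥ max (max p_b (p_a - 2 * p_b)) (max ((p_a - p_b) / 1.208) ((2 * p_a - p_b) / 3.2)) := by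
  have hpa : 0 < p_a := lt_of_lt_of_le hb hab
  have hf : ∀ c : ℝ, c * p_a ≤ (p_a - 2 * p_b + 2 * p_b ^ 2 / p_a) * p_a →
      c ≤ p_a - 2 * p_b + 2 * p_b ^ 2 / p_a := fun c h =>
    le_of_mul_le_mul_right h hpa
  have hkey : (p_a - 2 * p_b + 2 * p_b ^ 2 / p_a) * p_a
      = p_a ^ 2 - 2 * p_a * p_b + 2 * p_b ^ 2 := by
    field_simp
  rw [ge_iff_le]
  refine max_le (max_le (le_max_left _ _) ?_) (max_le ?_ ?_) <;>
    refine le_trans ?_ (le_max_right _ _) <;> apply hf <;> rw [hkey]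
  · nlinarith [sq_nonneg p_b]
  · rw [div_mul_eq_mul_div, div_le_iff₀ (by norm_num)]
    nlinarith [sq_nonneg (4.832 * p_b - 1.416 * p_a), sq_nonneg p_a]
  · rw [div_mul_eq_mul_div, div_le_iff₀ (by norm_num)]
    nlinarith [sq_nonneg (12.8 * p_b - 5.4 * p_a), sq_nonneg p_a]
end

section
/- Let n ≥ k ≥ 2 and let p : Fin n → ℝ≥0 and h : Fin n → Fin n → ℝ (defined for pairs a < b). Suppose α ≥ 0 is such that for every strictly increasing k-tuple of indices i_1 < i_2 < … < i_k in {1,…,n}, ∑_{a=1}^k ∑_{b=a+1}^k h(i_a, i_b) ≥ α · ∑_{a=1}^k p(i_a)·(k − a). Then ∑_{a=1}^n ∑_{b=a+1}^n h(a, b) ≥ α · ∑_{a=1}^n p(a)·(n − a). -/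
open Finset

-- helper: sum over a finset via orderEmbOfFin
lemma sum_orderEmb {n k : ℕ} (S : Finset (Fin n)) (hS : S.card = k) (F : Fin n → ℝ) :
    ∑ x ∈ S, F x = ∑ a : Fin k, F (S.orderEmbOfFin hS a) := by
  rw [Finset.sum_bij (fun a _ => S.orderEmbOfFin hS a)]
  · intro a _; exact Finset.orderEmbOfFin_mem S hS a
  · intro a _ b _ hab; exact (S.orderEmbOfFin hS).injective hab
  · intro x hx
    have : x ∈ Set.range (S.orderEmbOfFin hS) := by
      rw [Finset.range_orderEmbOfFin]; exact hx
    obtain ⟨a, ha⟩ := this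
    exact ⟨a, mem_univ a, ha⟩
  · intro a _; rfl

lemma count_pairs {n k : ℕ} (hk : 2 ≤ k) (x y : Fin n) (hxy : x ≠ y) :
    ((Finset.powersetCard k (univ : Finset (Fin n))).filter
      fun S => x ∈ S ∧ y ∈ S).card = (n - 2).choose (k - 2) := by
  have hcardxy : ({x, y} : Finset (Fin n)).card = 2 := by
    rw [Finset.card_insert_of_notMem (by simp [hxy]), Finset.card_singleton]
  have := Finset.card_bij' (fun S _ => S \ {x, y}) (fun T _ => T ∪ {x, y})
    (s := (Finset.powersetCard k (univ : Finset (Fin n))).filter fun S => x ∈ S ∧ y ∈ S)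
    (t := Finset.powersetCard (k - 2) ((univ : Finset (Fin n)) \ {x, y}))
    ?_ ?_ ?_ ?_
  · rw [this, Finset.card_powersetCard, Finset.card_sdiff_of_subset (Finset.subset_univ _),
      hcardxy, Finset.card_univ, Fintype.card_fin]
  · intro S hS
    simp only [mem_filter, Finset.mem_powersetCard] at hS
    obtain ⟨⟨_, hcard⟩, hx, hy⟩ := hS
    have hsub : ({x, y} : Finset (Fin n)) ⊆ S := by
      intro z hz; simp only [Finset.mem_insert, Finset.mem_singleton] at hz
      rcases hz with rfl | rfl <;> assumption
    rw [Finset.mem_powersetCard]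
    constructor
    · exact Finset.sdiff_subset_sdiff (Finset.subset_univ _) le_rfl
    · rw [Finset.card_sdiff_of_subset hsub, hcard, hcardxy]
  · intro T hT
    rw [Finset.mem_powersetCard] at hT
    obtain ⟨hsub, hcard⟩ := hT
    have hdisj : Disjoint T ({x, y} : Finset (Fin n)) :=
      Finset.disjoint_of_subset_left hsub (Finset.sdiff_disjoint)
    simp only [mem_filter, Finset.mem_powersetCard]
    refine ⟨⟨Finset.subset_univ _, ?_⟩, ?_, ?_⟩
    · rw [Finset.card_union_of_disjoint hdisj, hcard, hcardxy, Nat.sub_add_cancel hk]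
    · simp
    · simp
  · intro S hS
    simp only [mem_filter] at hS
    obtain ⟨_, hx, hy⟩ := hS
    apply Finset.sdiff_union_of_subset
    intro z hz; simp only [Finset.mem_insert, Finset.mem_singleton] at hz
    rcases hz with rfl | rfl <;> assumption
  · intro T hT
    rw [Finset.mem_powersetCard] at hT
    exact Finset.union_sdiff_cancel_right
      (Finset.disjoint_of_subset_left hT.1 (Finset.sdiff_disjoint))

-- q a * (m - (a+1)) expansion as a pair sum
lemma pair_sum {m : ℕ} (q : Fin m → ℝ) :
    ∑ a : Fin m, q a * ((m : ℝ) - ((a : ℕ) + 1))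
      = ∑ a : Fin m, ∑ b : Fin m, if a < b then q a else 0 := by
  refine Finset.sum_congr rfl fun a _ => ?_
  rw [← Finset.sum_filter, Finset.sum_const]
  have : (univ.filter fun b => a < b) = Finset.Ioi a := by
    ext b; simp
  rw [this, Fin.card_Ioi, nsmul_eq_mul, mul_comm]
  congr 1
  have h1 : (a : ℕ) + 1 ≤ m := a.2
  have h2 : 1 + (a:ℕ) ≤ m := by omega
  rw [Nat.sub_sub, Nat.cast_sub h2]
  push_cast
  ring

theorem averaging_lemma (n k : ℕ) (hk : 2 ≤ k) (hkn : k ≤ n)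
    (p : Fin n → ℝ) (hp : ∀ a, 0 ≤ p a)
    (h : Fin n → Fin n → ℝ) (α : ℝ) (hα : 0 ≤ α)
    (hyp : ∀ ι : Fin k → Fin n, StrictMono ι →
      (∑ a : Fin k, ∑ b : Fin k, if a < b then h (ι a) (ι b) else 0)
        ≥ α * ∑ a : Fin k, p (ι a) * ((k : ℝ) - ((a : ℕ) + 1))) :
    (∑ a : Fin n, ∑ b : Fin n, if a < b then h a b else 0)
      ≥ α * ∑ a : Fin n, p a * ((n : ℝ) - ((a : ℕ) + 1)) := by
  set g : Fin n → Fin n → ℝ := fun x y => h x y - α * p x with hg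
  -- rewrite hypothesis in terms of g
  have key : ∀ ι : Fin k → Fin n, StrictMono ι →
      0 ≤ ∑ a : Fin k, ∑ b : Fin k, if a < b then g (ι a) (ι b) else 0 := by
    intro ι hι
    have h1 := hyp ι hι
    rw [Finset.mul_sum] at h1
    have h2 : ∑ a : Fin k, α * (p (ι a) * ((k : ℝ) - ((a : ℕ) + 1)))
        = ∑ a : Fin k, ∑ b : Fin k, if a < b then α * p (ι a) else 0 := by
      rw [← pair_sum (fun a => α * p (ι a))]
      refine Finset.sum_congr rfl fun a _ => by ring
    rw [h2] at h1
    have h3 : ∑ a : Fin k, ∑ b : Fin k, (if a < b then g (ι a) (ι b) else 0)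
        = (∑ a : Fin k, ∑ b : Fin k, if a < b then h (ι a) (ι b) else 0)
          - ∑ a : Fin k, ∑ b : Fin k, if a < b then α * p (ι a) else 0 := by
      rw [← Finset.sum_sub_distrib]
      refine Finset.sum_congr rfl fun a _ => ?_
      rw [← Finset.sum_sub_distrib]
      refine Finset.sum_congr rfl fun b _ => ?_
      split <;> simp [hg]
    rw [h3]
    linarith
  -- goal in terms of g
  have goal2 : ∀ _ : 0 ≤ ∑ x : Fin n, ∑ y : Fin n, if x < y then g x y else 0,
      (∑ a : Fin n, ∑ b : Fin n, if a < b then h a b else 0)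
        ≥ α * ∑ a : Fin n, p a * ((n : ℝ) - ((a : ℕ) + 1)) := by
    intro hgoal
    rw [Finset.mul_sum]
    have h2 : ∑ a : Fin n, α * (p a * ((n : ℝ) - ((a : ℕ) + 1)))
        = ∑ a : Fin n, ∑ b : Fin n, if a < b then α * p a else 0 := by
      rw [← pair_sum (fun a => α * p a)]
      refine Finset.sum_congr rfl fun a _ => by ring
    rw [h2]
    have h3 : ∑ x : Fin n, ∑ y : Fin n, (if x < y then g x y else 0)
        = (∑ a : Fin n, ∑ b : Fin n, if a < b then h a b else 0)
          - ∑ a : Fin n, ∑ b : Fin n, if a < b then α * p a else 0 := by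
      rw [← Finset.sum_sub_distrib]
      refine Finset.sum_congr rfl fun a _ => ?_
      rw [← Finset.sum_sub_distrib]
      refine Finset.sum_congr rfl fun b _ => ?_
      split <;> simp [hg]
    rw [h3] at hgoal
    linarith
  apply goal2
  -- main averaging argument
  set N : ℕ := (n - 2).choose (k - 2) with hN
  have hNpos : 0 < N := Nat.choose_pos (by omega)
  -- total sum over all k-subsets
  have hT : 0 ≤ ∑ S ∈ Finset.powersetCard k (univ : Finset (Fin n)),
      ∑ x : Fin n, ∑ y : Fin n, if x ∈ S ∧ y ∈ S ∧ x < y then g x y else 0 := by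
    apply Finset.sum_nonneg
    intro S hS
    rw [Finset.mem_powersetCard] at hS
    obtain ⟨-, hcard⟩ := hS
    set ι : Fin k → Fin n := fun a => S.orderEmbOfFin hcard a with hι
    have hmono : StrictMono ι := (S.orderEmbOfFin hcard).strictMono
    have heq : ∑ x : Fin n, ∑ y : Fin n, (if x ∈ S ∧ y ∈ S ∧ x < y then g x y else 0)
        = ∑ a : Fin k, ∑ b : Fin k, if a < b then g (ι a) (ι b) else 0 := by
      have step1 : ∀ x : Fin n, ∑ y : Fin n, (if x ∈ S ∧ y ∈ S ∧ x < y then g x y else 0)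
          = if x ∈ S then ∑ y ∈ S, (if x < y then g x y else 0) else 0 := by
        intro x
        by_cases hx : x ∈ S
        · simp only [hx, true_and, if_true]
          rw [← Finset.sum_filter, ← Finset.sum_filter]
          congr 1
          ext y; simp [hx, and_comm]
        · simp [hx]
      rw [Finset.sum_congr rfl fun x _ => step1 x, ← Finset.sum_filter]
      have hfil : (univ.filter fun x => x ∈ S) = S := by ext x; simp
      rw [hfil, sum_orderEmb S hcard]
      refine Finset.sum_congr rfl fun a _ => ?_
      rw [sum_orderEmb S hcard]
      refine Finset.sum_congr rfl fun b _ => ?_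
      congr 1
      simp [hι, (S.orderEmbOfFin hcard).lt_iff_lt]
    rw [heq]
    exact key ι hmono
  -- swap sums and count
  have hswap : ∑ S ∈ Finset.powersetCard k (univ : Finset (Fin n)),
      ∑ x : Fin n, ∑ y : Fin n, (if x ∈ S ∧ y ∈ S ∧ x < y then g x y else 0)
      = (N : ℝ) * ∑ x : Fin n, ∑ y : Fin n, if x < y then g x y else 0 := by
    rw [Finset.sum_comm]
    rw [Finset.mul_sum]
    refine Finset.sum_congr rfl fun x _ => ?_
    rw [Finset.sum_comm, Finset.mul_sum]
    refine Finset.sum_congr rfl fun y _ => ?_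
    by_cases hxy : x < y
    · simp only [hxy, and_true, if_true]
      rw [← Finset.sum_filter]
      rw [Finset.sum_const, nsmul_eq_mul]
      congr 1
      rw [count_pairs hk x y (ne_of_lt hxy)]
    · simp [hxy]
  rw [hswap] at hT
  have : (0:ℝ) < (N:ℝ) := by exact_mod_cast hNpos
  exact nonneg_of_mul_nonneg_right hT this
end
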